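/- The coefficient of x^{-n+3} in the formal Laurent expansion of e^x/(e^x-1)^n equals -(1/48)(n-1)(n-2)(n-4), for every integer n. -/

import Mathlib

/-!
Write `e^x - 1 = x u` with `u = (e^x - 1)/x`, a power series with constant coefficient `1`, hence
a unit. Then `e^x/(e^x - 1)^n = x^{-n} e^x u^{-n}`, and since `e^x = 1 + x u` the wanted coefficient
is `[x^3] u^{-n} + [x^2] u^{1-n}`. For every integer `m` the coefficients of `u^m` up to `x^3` are
given by the truncated binomial expansion `zpowJet u m`: the congruence
`zpowJet u m * u ≡ zpowJet u (m + 1) mod x^4` lets an induction on `m` run in both directions,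
because `u` is invertible.
-/

/-- `E = e^x` as a formal Laurent series over `ℚ`. -/
noncomputable def E : LaurentSeries ℚ := HahnSeries.ofPowerSeries ℤ ℚ (PowerSeries.exp ℚ)

/-- `q n k` is the coefficient of `x^k` in the Laurent expansion of `e^x/(e^x-1)^n`. -/
noncomputable def q (n k : ℤ) : ℚ := (E * ((E - 1) ^ n)⁻¹).coeff k

namespace PowerSeries

section ZPowJet

variable {K : Type*} [Field K] [CharZero K]

noncomputable def zpowJet (u : K⟦X⟧) (m : ℤ) : K⟦X⟧ :=
  mk fun
    | 0 => 1
    | 1 => m * coeff 1 u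
    | 2 => m * coeff 2 u + m * (m - 1) / 2 * coeff 1 u ^ 2
    | 3 => m * coeff 3 u + m * (m - 1) * coeff 1 u * coeff 2 u
        + m * (m - 1) * (m - 2) / 6 * coeff 1 u ^ 3
    | _ => 0

theorem X_pow_four_dvd_zpowJet_mul_sub {u : K⟦X⟧} (hu : constantCoeff u = 1) (m : ℤ) :
    X ^ 4 ∣ zpowJet u m * u - zpowJet u (m + 1) := by
  have hu0 : coeff 0 u = 1 := by rwa [coeff_zero_eq_constantCoeff_apply]
  rw [X_pow_dvd_iff]
  intro k hk
  interval_cases k <;>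
    simp only [map_sub, coeff_mul, Finset.Nat.sum_antidiagonal_eq_sum_range_succ_mk,
      Finset.sum_range_succ, Finset.sum_range_zero, hu0, zpowJet, coeff_mk] <;> push_cast <;> ring

theorem X_pow_four_dvd_zpow_sub_zpowJet {u : K⟦X⟧ˣ} (hu : constantCoeff (u : K⟦X⟧) = 1)
    (m : ℤ) : X ^ 4 ∣ ((u ^ m : K⟦X⟧ˣ) : K⟦X⟧) - zpowJet (u : K⟦X⟧) m := by
  induction m using Int.induction_on with
  | zero =>
    rw [X_pow_dvd_iff]
    intro k hk
    interval_cases k <;> simp [zpowJet]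
  | succ m ih =>
    have hjet := X_pow_four_dvd_zpowJet_mul_sub hu m
    rw [zpow_add_one, Units.val_mul]
    convert (dvd_mul_of_dvd_left ih u).add hjet using 1
    ring
  | pred m ih =>
    have hjet := X_pow_four_dvd_zpowJet_mul_sub hu (-m - 1)
    rw [sub_add_cancel] at hjet
    rw [zpow_sub_one, Units.val_mul]
    convert (dvd_mul_of_dvd_left ih ↑u⁻¹).sub (dvd_mul_of_dvd_left hjet ↑u⁻¹) using 1
    linear_combination zpowJet (u : K⟦X⟧) (-m - 1) * u.mul_inv

theorem coeff_zpow_eq_coeff_zpowJet {u : K⟦X⟧ˣ} (hu : constantCoeff (u : K⟦X⟧) = 1)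
    (m : ℤ) {k : ℕ} (hk : k < 4) :
    coeff k ((u ^ m : K⟦X⟧ˣ) : K⟦X⟧) = coeff k (zpowJet (u : K⟦X⟧) m) := by
  rw [← sub_eq_zero, ← map_sub]
  exact X_pow_dvd_iff.1 (X_pow_four_dvd_zpow_sub_zpowJet hu m) k hk

end ZPowJet

noncomputable def expSubOneDivX : ℚ⟦X⟧ := mk fun k => 1 / (k + 1).factorial

theorem exp_sub_one_eq_X_mul_expSubOneDivX : exp ℚ - 1 = X * expSubOneDivX := by
  ext (_ | k) <;> simp [expSubOneDivX, coeff_exp, coeff_succ_X_mul]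

theorem constantCoeff_expSubOneDivX : constantCoeff expSubOneDivX = 1 := by
  simp [expSubOneDivX]

theorem isUnit_expSubOneDivX : IsUnit expSubOneDivX := by
  simp [isUnit_iff_constantCoeff, constantCoeff_expSubOneDivX]

end PowerSeries

open PowerSeries HahnSeries

theorem map_units_zpow {M G F : Type*} [Monoid M] [DivisionMonoid G] [FunLike F M G]
    [MonoidHomClass F M G] (f : F) (u : Mˣ) (m : ℤ) : f ↑(u ^ m) = f ↑u ^ m := by
  have h := congrArg Units.val (map_zpow (Units.map (f : M →* G)) u m)
  rwa [Units.val_zpow_eq_zpow_val, Units.coe_map, Units.coe_map] at h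

theorem E_mul_inv_sub_one_zpow (n : ℤ) :
    E * ((E - 1) ^ n)⁻¹ = single (-n) 1 *
      ofPowerSeries ℤ ℚ (exp ℚ * ↑(isUnit_expSubOneDivX.unit ^ (-n))) := by
  have h : E - 1 = single 1 1 * ofPowerSeries ℤ ℚ ↑isUnit_expSubOneDivX.unit := by
    rw [IsUnit.unit_spec, ← ofPowerSeries_X, ← map_mul, ← exp_sub_one_eq_X_mul_expSubOneDivX,
      map_sub, map_one, E]
  rw [h, mul_zpow, mul_inv, ← zpow_neg, ← zpow_neg, ← RatFunc.single_zpow, ← map_units_zpow,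
    map_mul, E]
  ring

/-- The coefficient of `x^{-n+3}` in `e^x/(e^x-1)^n` is `-(1/48)(n-1)(n-2)(n-4)`. -/
theorem stmt9 (n : ℤ) :
    q n (-n + 3) = -(1 / 48) * ((n : ℚ) - 1) * ((n : ℚ) - 2) * ((n : ℚ) - 4) := by
  set u := isUnit_expSubOneDivX.unit
  have hu_val : (u : ℚ⟦X⟧) = expSubOneDivX := isUnit_expSubOneDivX.unit_spec
  have hu : constantCoeff (u : ℚ⟦X⟧) = 1 := hu_val ▸ constantCoeff_expSubOneDivX
  have hexp : exp ℚ * ((u ^ (-n) : ℚ⟦X⟧ˣ) : ℚ⟦X⟧) =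
      ((u ^ (-n) : ℚ⟦X⟧ˣ) : ℚ⟦X⟧) + X * ((u ^ (1 - n) : ℚ⟦X⟧ˣ) : ℚ⟦X⟧) := by
    rw [sub_eq_add_neg, zpow_add, zpow_one, Units.val_mul, ← mul_assoc, hu_val,
      ← exp_sub_one_eq_X_mul_expSubOneDivX]
    ring
  rw [q, E_mul_inv_sub_one_zpow, show -n + 3 = 3 + -n by ring, coeff_single_mul_add, one_mul,
    show (3 : ℤ) = (3 : ℕ) from rfl, ofPowerSeries_apply_coeff, hexp, map_add, coeff_succ_X_mul,
    coeff_zpow_eq_coeff_zpowJet hu _ (by norm_num), coeff_zpow_eq_coeff_zpowJet hu _ (by norm_num)]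
  simp only [zpowJet, coeff_mk, hu_val, expSubOneDivX, Nat.factorial]
  push_cast
  ring
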